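/- arXiv:2108.03398 — 5 statements merged into one kernel-verified Lean document; each statement's English description precedes it below -/
import Mathlib

section
/- Let f : ℝ^d → ℝ≥0 be an arbitrary function such that for every b ∈ ℤ≥0 there is a constant K_b with f(a) ≤ K_b·(1+‖a‖)^{-b} for all a ∈ ℝ^d. Then there exists a smooth Schwartz function ν : ℝ^d → ℝ with ν(a) > 0 for all a and f(a) ≤ ν(a) for all a ∈ ℝ^d. -/
/-!
Cover `ℝ^d` by the regions `2 ^ n ≤ 1 + ‖a‖`. By rapid decay, `c n = ⨅ b, K_b / 2 ^ (n b)` bounds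
`f` there and decays faster than every power of `2 ^ n`; adding `1 / n!` keeps it positive with the
same decay. With `χ` a bump function equal to `1` on the ball of radius `2`, take
`ν x = ∑ n, c n * χ (2 ^ (-n) • x)`. The `(k, m)` Schwartz seminorm of `χ (2 ^ (-n) • ·)` is at
most `2 ^ (n k)` times that of `χ`, so the series converges in every seminorm and `ν` is Schwartz;
on the shell `2 ^ n ≤ 1 + ‖a‖ < 2 ^ (n + 1)` its `n`-th term alone equals `c n ≥ f a`.
-/

open scoped NNReal Nat ContDiff SchwartzMap

namespace SchwartzMap

variable {ι E F : Type*} [NormedAddCommGroup E] [NormedSpace ℝ E]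
  [NormedAddCommGroup F] [NormedSpace ℝ F] (g : 𝓢(E, F))

theorem norm_pow_mul_norm_iteratedFDeriv_smul_comp_inv_smul_le (c : ℝ) {R : ℝ}
    (hR : 1 ≤ R) (k m : ℕ) (x : E) :
    ‖x‖ ^ k * ‖iteratedFDeriv ℝ m (fun y => c • g (R⁻¹ • y)) x‖ ≤
      |c| * R ^ k * SchwartzMap.seminorm ℝ k m g := by
  have hR0 : 0 < R := zero_lt_one.trans_le hR
  have hg : ContDiff ℝ m g := g.smooth ⊤ |>.of_le (mod_cast le_top)
  have hx : ‖x‖ = R * ‖R⁻¹ • x‖ := by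
    rw [norm_smul, norm_inv, Real.norm_of_nonneg hR0.le, mul_inv_cancel_left₀ hR0.ne']
  have hscale : ‖(R⁻¹ ^ m : ℝ)‖ ≤ 1 := by
    rw [norm_pow, norm_inv, Real.norm_of_nonneg hR0.le]
    exact pow_le_one₀ (by positivity) (inv_le_one_of_one_le₀ hR)
  rw [iteratedFDeriv_const_smul_apply' (f := fun y => g (R⁻¹ • y))
      (hg.comp (contDiff_const_smul _)).contDiffAt,
    iteratedFDeriv_comp_const_smul _ hg, norm_smul, norm_smul, Real.norm_eq_abs, hx, mul_pow]
  calc R ^ k * ‖R⁻¹ • x‖ ^ k * (|c| * (‖R⁻¹ ^ m‖ * ‖iteratedFDeriv ℝ m g (R⁻¹ • x)‖))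
      ≤ R ^ k * ‖R⁻¹ • x‖ ^ k * (|c| * ‖iteratedFDeriv ℝ m g (R⁻¹ • x)‖) := by
        gcongr; exact mul_le_of_le_one_left (norm_nonneg _) hscale
    _ = |c| * R ^ k * (‖R⁻¹ • x‖ ^ k * ‖iteratedFDeriv ℝ m g (R⁻¹ • x)‖) := by ring
    _ ≤ |c| * R ^ k * SchwartzMap.seminorm ℝ k m g := by gcongr; exact le_seminorm ℝ k m g _

theorem norm_iteratedFDeriv_smul_comp_inv_smul_le (c : ℝ) {R : ℝ} (hR : 1 ≤ R) (m : ℕ) (x : E) :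
    ‖iteratedFDeriv ℝ m (fun y => c • g (R⁻¹ • y)) x‖ ≤ |c| * SchwartzMap.seminorm ℝ 0 m g := by
  simpa using norm_pow_mul_norm_iteratedFDeriv_smul_comp_inv_smul_le g c hR 0 m x

theorem contDiff_smul_comp_inv_smul (c R : ℝ) : ContDiff ℝ ∞ fun y => c • g (R⁻¹ • y) :=
  contDiff_const.smul ((g.smooth ⊤).comp (contDiff_const_smul _))

variable [CompleteSpace F] {c R : ι → ℝ}

theorem summable_smul_comp_inv_smul (hR : ∀ i, 1 ≤ R i) (hc : Summable fun i => |c i|) (x : E) :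
    Summable fun i => c i • g ((R i)⁻¹ • x) := by
  refine .of_norm_bounded (hc.mul_right (SchwartzMap.seminorm ℝ 0 0 g)) fun i => ?_
  simpa using norm_iteratedFDeriv_smul_comp_inv_smul_le g (c i) (hR i) 0 x

theorem iteratedFDeriv_tsum_smul_comp_inv_smul (hR : ∀ i, 1 ≤ R i)
    (hc : Summable fun i => |c i|) (m : ℕ) (x : E) :
    iteratedFDeriv ℝ m (fun y => ∑' i, c i • g ((R i)⁻¹ • y)) x =
      ∑' i, iteratedFDeriv ℝ m (fun y => c i • g ((R i)⁻¹ • y)) x :=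
  iteratedFDeriv_tsum_apply (fun i => g.contDiff_smul_comp_inv_smul (c i) (R i))
    (fun m _ => hc.mul_right (SchwartzMap.seminorm ℝ 0 m g))
    (fun m i x _ => norm_iteratedFDeriv_smul_comp_inv_smul_le g (c i) (hR i) m x) le_top x

noncomputable def dilationSeries (hR : ∀ i, 1 ≤ R i)
    (hc : ∀ k : ℕ, Summable fun i => |c i| * R i ^ k) : 𝓢(E, F) where
  toFun x := ∑' i, c i • g ((R i)⁻¹ • x)
  smooth' := by
    refine contDiff_tsum (fun i => g.contDiff_smul_comp_inv_smul (c i) (R i))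
      (fun m _ => (hc 0).mul_right (SchwartzMap.seminorm ℝ 0 m g)) fun m i x _ => ?_
    simpa using norm_iteratedFDeriv_smul_comp_inv_smul_le g (c i) (hR i) m x
  decay' k m := by
    have hc0 : Summable fun i => |c i| := by simpa using hc 0
    refine ⟨∑' i, |c i| * R i ^ k * SchwartzMap.seminorm ℝ k m g, fun x => ?_⟩
    have hnorm : Summable fun i => ‖iteratedFDeriv ℝ m (fun y => c i • g ((R i)⁻¹ • y)) x‖ :=
      .of_nonneg_of_le (fun i => norm_nonneg _)
        (fun i => norm_iteratedFDeriv_smul_comp_inv_smul_le g (c i) (hR i) m x)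
        (hc0.mul_right (SchwartzMap.seminorm ℝ 0 m g))
    rw [iteratedFDeriv_tsum_smul_comp_inv_smul g hR hc0 m x]
    calc ‖x‖ ^ k * ‖∑' i, iteratedFDeriv ℝ m (fun y => c i • g ((R i)⁻¹ • y)) x‖
        ≤ ∑' i, ‖x‖ ^ k * ‖iteratedFDeriv ℝ m (fun y => c i • g ((R i)⁻¹ • y)) x‖ := by
          rw [tsum_mul_left]; gcongr; exact norm_tsum_le_tsum_norm hnorm
      _ ≤ _ := (hnorm.mul_left _).tsum_le_tsum
          (fun i => norm_pow_mul_norm_iteratedFDeriv_smul_comp_inv_smul_le g (c i) (hR i) k m x)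
          ((hc k).mul_right _)

theorem dilationSeries_apply (hR : ∀ i, 1 ≤ R i) (hc : ∀ k : ℕ, Summable fun i => |c i| * R i ^ k)
    (x : E) : g.dilationSeries hR hc x = ∑' i, c i • g ((R i)⁻¹ • x) := rfl

theorem le_dilationSeries_apply (g : 𝓢(E, ℝ)) (hg : ∀ x, 0 ≤ g x) (hR : ∀ i, 1 ≤ R i)
    (hc : ∀ k : ℕ, Summable fun i => |c i| * R i ^ k) (hc0 : ∀ i, 0 ≤ c i) (x : E) (i : ι) :
    c i * g ((R i)⁻¹ • x) ≤ g.dilationSeries hR hc x := by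
  rw [dilationSeries_apply]
  exact (summable_smul_comp_inv_smul g hR (by simpa using hc 0) x).le_tsum i
    fun j _ => mul_nonneg (hc0 j) (hg _)

end SchwartzMap

theorem mul_rpow_neg_natCast_le_div_pow {u v K : ℝ} (hv : 0 < v) (hvu : v ≤ u) (hK : 0 ≤ K)
    (b : ℕ) : K * u ^ (-(b : ℝ)) ≤ K / v ^ b := by
  rw [Real.rpow_neg (hv.le.trans hvu), Real.rpow_natCast, div_eq_mul_inv]
  gcongr

theorem exists_pos_summable_bound_of_rapid_decay {E : Type*} [SeminormedAddCommGroup E]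
    (f : E → ℝ≥0) (hf : ∀ b : ℕ, ∃ K : ℝ, ∀ a, (f a : ℝ) ≤ K * (1 + ‖a‖) ^ (-(b : ℝ))) :
    ∃ c : ℕ → ℝ, (∀ n, 0 < c n) ∧ (∀ k : ℕ, Summable fun n => c n * (2 ^ n) ^ k) ∧
      ∀ n a, 2 ^ n ≤ 1 + ‖a‖ → (f a : ℝ) ≤ c n := by
  choose K hK using hf
  have hK0 (b : ℕ) : 0 ≤ K b := by simpa using (f 0).2.trans (hK b 0)
  set s : ℕ → ℝ := fun n => ⨅ b : ℕ, K b / (2 ^ n) ^ b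
  have hs_bdd (n : ℕ) : BddBelow (Set.range fun b : ℕ => K b / (2 ^ n) ^ b) :=
    ⟨0, by rintro _ ⟨b, rfl⟩; have := hK0 b; positivity⟩
  have hs0 (n : ℕ) : 0 ≤ s n := le_ciInf fun b => by have := hK0 b; positivity
  have hs_le (n k : ℕ) : s n * (2 ^ n) ^ k ≤ K (k + 1) * (1 / 2) ^ n := by
    calc s n * (2 ^ n) ^ k ≤ K (k + 1) / (2 ^ n) ^ (k + 1) * (2 ^ n) ^ k := by
          gcongr; exact ciInf_le (hs_bdd n) (k + 1)
      _ = K (k + 1) * (1 / 2) ^ n := by rw [pow_succ, one_div, inv_pow]; field_simp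
  refine ⟨fun n => s n + 1 / n !, fun n => by have := hs0 n; positivity, fun k => ?_,
    fun n a ha => ?_⟩
  · have hgeom := (summable_geometric_two.mul_left (K (k + 1))).add
      (Real.summable_pow_div_factorial (2 ^ k))
    refine .of_nonneg_of_le (fun n => by have := hs0 n; positivity) (fun n => ?_) hgeom
    calc (s n + 1 / n !) * (2 ^ n) ^ k = s n * (2 ^ n) ^ k + (2 ^ k) ^ n / n ! := by ring
      _ ≤ K (k + 1) * (1 / 2) ^ n + (2 ^ k) ^ n / n ! := add_le_add_left (hs_le n k) _
  · have hfs : (f a : ℝ) ≤ s n := le_ciInf fun b =>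
      (hK b a).trans (mul_rpow_neg_natCast_le_div_pow (by positivity) ha (hK0 b) b)
    exact hfs.trans (le_add_of_nonneg_right (by positivity))

/-- Any rapidly decaying nonnegative function is dominated by a strictly
positive Schwartz function. -/
theorem regularizing_decay_bounds (d : ℕ)
    (f : EuclideanSpace ℝ (Fin d) → ℝ≥0)
    (hf : ∀ b : ℕ, ∃ K : ℝ, ∀ a, (f a : ℝ) ≤ K * (1 + ‖a‖) ^ (-(b : ℝ))) :
    ∃ ν : SchwartzMap (EuclideanSpace ℝ (Fin d)) ℝ,
      (∀ a, 0 < ν a) ∧ ∀ a, (f a : ℝ) ≤ ν a := by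
  obtain ⟨c, hc_pos, hc_sum, hfc⟩ := exists_pos_summable_bound_of_rapid_decay f hf
  let χ : ContDiffBump (0 : EuclideanSpace ℝ (Fin d)) := ⟨2, 3, two_pos, by norm_num⟩
  let g := χ.hasCompactSupport.toSchwartzMap (χ.contDiff (n := ⊤))
  have hR (n : ℕ) : (1 : ℝ) ≤ 2 ^ n := one_le_pow₀ one_le_two
  have hc (k : ℕ) : Summable fun n => |c n| * (2 ^ n) ^ k := by
    simpa only [abs_of_pos (hc_pos _)] using hc_sum k
  set ν := g.dilationSeries hR hc
  have hshell (a) : ∃ n, (f a : ℝ) ≤ c n ∧ c n ≤ ν a := by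
    obtain ⟨n, hn, hn'⟩ := exists_nat_pow_near (le_add_of_nonneg_right (norm_nonneg a)) one_lt_two
    have hχ : χ (((2 : ℝ) ^ n)⁻¹ • a) = 1 := by
      refine χ.one_of_mem_closedBall ?_
      rw [mem_closedBall_zero_iff, norm_smul, norm_inv, norm_pow, Real.norm_two,
        inv_mul_le_iff₀ (by positivity)]
      show ‖a‖ ≤ 2 ^ n * 2
      rw [← pow_succ]; linarith
    refine ⟨n, hfc n a hn, ?_⟩
    simpa [g, hχ] using
      g.le_dilationSeries_apply (fun x => χ.nonneg) hR hc (fun n => (hc_pos n).le) a n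
  refine ⟨ν, fun a => ?_, fun a => ?_⟩ <;> obtain ⟨n, hfn, hnν⟩ := hshell a
  · exact (hc_pos n).trans_le hnν
  · exact hfn.trans hnν
end

section
/- There is an absolute constant C such that for all real A ≥ 1, Σ_{a square-full, A ≤ a ≤ 2A} (cub(a)/a)^{1/2} ≤ C · A^{1/3}, where cub(a) := ∏_{p : v_p(a) ≥ 3} p^{v_p(a)} is the cube-full part of a, and a is called square-full if v_p(a) ≥ 2 for every prime p dividing a. -/
open Classical

/-- `n` is square-full if every prime divisor occurs with exponent at least 2. -/
def IsSquarefull (n : ℕ) : Prop := ∀ p : ℕ, p.Prime → p ∣ n → 2 ≤ n.factorization p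

/-- The cube-full part of `n`: the product of `p^{v_p(n)}` over primes with `v_p(n) ≥ 3`. -/
def cub (n : ℕ) : ℕ :=
  ∏ p ∈ n.primeFactors, if 3 ≤ n.factorization p then p ^ n.factorization p else 1

open Finset
def eα (e : ℕ) : ℕ := if e % 3 = 0 then e / 3 else if e % 3 = 1 then (e - 4) / 3 else (e - 5) / 3
def eβ (e : ℕ) : ℕ := if e % 3 = 1 then 1 else 0
def eγ (e : ℕ) : ℕ := if e % 3 = 2 then 1 else 0

lemma eabc {e : ℕ} (he : 3 ≤ e) : eα e * 3 + eβ e * 4 + eγ e * 5 = e := by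
  unfold eα eβ eγ; split_ifs <;> omega

def MP (n : ℕ) : ℕ := ∏ p ∈ n.primeFactors, if 3 ≤ n.factorization p then 1 else p
def UP (n : ℕ) : ℕ :=
  ∏ p ∈ n.primeFactors, p ^ (if 3 ≤ n.factorization p then eα (n.factorization p) else 0)
def VP (n : ℕ) : ℕ :=
  ∏ p ∈ n.primeFactors, p ^ (if 3 ≤ n.factorization p then eβ (n.factorization p) else 0)
def WP (n : ℕ) : ℕ :=
  ∏ p ∈ n.primeFactors, p ^ (if 3 ≤ n.factorization p then eγ (n.factorization p) else 0)

lemma MP_pos (n : ℕ) : 1 ≤ MP n := by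
  apply Finset.one_le_prod'
  intro p hp
  split_ifs
  · exact le_refl 1
  · exact (Nat.prime_of_mem_primeFactors hp).one_lt.le

lemma UP_pos (n : ℕ) : 1 ≤ UP n :=
  Finset.one_le_prod' fun p hp => Nat.one_le_pow _ _ (Nat.prime_of_mem_primeFactors hp).pos

lemma VP_pos (n : ℕ) : 1 ≤ VP n :=
  Finset.one_le_prod' fun p hp => Nat.one_le_pow _ _ (Nat.prime_of_mem_primeFactors hp).pos

lemma WP_pos (n : ℕ) : 1 ≤ WP n :=
  Finset.one_le_prod' fun p hp => Nat.one_le_pow _ _ (Nat.prime_of_mem_primeFactors hp).pos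

lemma cub_pos (n : ℕ) : 1 ≤ cub n := by
  apply Finset.one_le_prod'
  intro p hp
  split_ifs
  · exact Nat.one_le_pow _ _ (Nat.prime_of_mem_primeFactors hp).pos
  · exact le_refl 1

lemma cub_eq (n : ℕ) : UP n ^ 3 * VP n ^ 4 * WP n ^ 5 = cub n := by
  unfold UP VP WP cub
  rw [← Finset.prod_pow, ← Finset.prod_pow, ← Finset.prod_pow, ← Finset.prod_mul_distrib,
    ← Finset.prod_mul_distrib]
  apply Finset.prod_congr rfl
  intro p hp
  by_cases h : 3 ≤ n.factorization p
  · rw [if_pos h, if_pos h, if_pos h, if_pos h, ← pow_mul, ← pow_mul, ← pow_mul,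
      ← pow_add, ← pow_add, eabc h]
  · rw [if_neg h, if_neg h, if_neg h, if_neg h]
    simp

lemma decomp {n : ℕ} (hn : n ≠ 0) (hs : IsSquarefull n) :
    MP n ^ 2 * cub n = n := by
  rw [← cub_eq]
  unfold MP UP VP WP
  conv_rhs => rw [← Nat.factorization_prod_pow_eq_self hn]
  rw [Nat.prod_factorization_eq_prod_primeFactors]
  rw [← Finset.prod_pow, ← Finset.prod_pow, ← Finset.prod_pow, ← Finset.prod_pow,
    ← Finset.prod_mul_distrib, ← Finset.prod_mul_distrib, ← Finset.prod_mul_distrib]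
  apply Finset.prod_congr rfl
  intro p hp
  have h2 : 2 ≤ n.factorization p :=
    hs p (Nat.prime_of_mem_primeFactors hp) (Nat.dvd_of_mem_primeFactors hp)
  by_cases h : 3 ≤ n.factorization p
  · rw [if_pos h, if_pos h, if_pos h, if_pos h, one_pow, one_mul, ← pow_mul, ← pow_mul,
      ← pow_mul, ← pow_add, ← pow_add, eabc h]
  · rw [if_neg h, if_neg h, if_neg h, if_neg h]
    have : n.factorization p = 2 := by omega
    simp [this]

lemma inner_bound (A k : ℝ) (hA : 1 ≤ A) (hk : 1 ≤ k) (B : ℕ) :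
    ∑ m ∈ Finset.Icc 1 B, (if A ≤ (m:ℝ)^2 * k ∧ (m:ℝ)^2 * k ≤ 2*A then 1/(m:ℝ) else 0)
    ≤ if k ≤ 2*A then Real.sqrt 2 else 0 := by
  by_cases hk2 : k ≤ 2*A
  · rw [if_pos hk2, ← Finset.sum_filter]
    set s : Finset ℕ := (Finset.Icc 1 B).filter
      (fun m : ℕ => A ≤ (m:ℝ)^2 * k ∧ (m:ℝ)^2 * k ≤ 2*A) with hsdef
    rcases s.eq_empty_or_nonempty with h | h
    · rw [h]
      simp [Real.sqrt_nonneg]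
    · set M₁ : ℝ := max 1 (Real.sqrt (A/k)) with hM₁def
      have hM₁ : 1 ≤ M₁ := le_max_left _ _
      have hM₁pos : 0 < M₁ := lt_of_lt_of_le one_pos hM₁
      have hkpos : 0 < k := lt_of_lt_of_le one_pos hk
      set N : ℝ := Real.sqrt (2*A/k) with hNdef
      have hNnonneg : 0 ≤ N := Real.sqrt_nonneg _
      have key : ∀ m ∈ s, M₁ ≤ (m:ℝ) ∧ (m:ℝ) ≤ N := by
        intro m hm
        rw [hsdef, Finset.mem_filter, Finset.mem_Icc] at hm
        obtain ⟨⟨hm1, _⟩, hma, hmb⟩ := hm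
        have hm1' : (1:ℝ) ≤ (m:ℝ) := by exact_mod_cast hm1
        constructor
        · apply max_le hm1'
          have : A/k ≤ (m:ℝ)^2 := by
            rw [div_le_iff₀ hkpos]; exact hma
          calc Real.sqrt (A/k) ≤ Real.sqrt ((m:ℝ)^2) := Real.sqrt_le_sqrt this
            _ = m := by rw [Real.sqrt_sq (by positivity)]
        · have : (m:ℝ)^2 ≤ 2*A/k := by
            rw [le_div_iff₀ hkpos]; exact hmb
          calc (m:ℝ) = Real.sqrt ((m:ℝ)^2) := by rw [Real.sqrt_sq (by positivity)]
            _ ≤ N := Real.sqrt_le_sqrt this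
      have hsub : s ⊆ Finset.Icc ⌈M₁⌉₊ ⌊N⌋₊ := by
        intro m hm
        rw [Finset.mem_Icc]
        obtain ⟨h1, h2⟩ := key m hm
        exact ⟨Nat.ceil_le.mpr h1, Nat.le_floor h2⟩
      have hcard : (s.card : ℝ) ≤ N + 1 - M₁ := by
        obtain ⟨x, hx⟩ := h
        have hmn : ⌈M₁⌉₊ ≤ ⌊N⌋₊ := by
          have h1 := (Finset.mem_Icc.mp (hsub hx)).1
          have h2 := (Finset.mem_Icc.mp (hsub hx)).2
          omega
        calc (s.card : ℝ) ≤ ((Finset.Icc ⌈M₁⌉₊ ⌊N⌋₊).card : ℝ) := by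
              exact_mod_cast Finset.card_le_card hsub
          _ = ((⌊N⌋₊ + 1 - ⌈M₁⌉₊ : ℕ) : ℝ) := by rw [Nat.card_Icc]
          _ = (⌊N⌋₊ : ℝ) + 1 - ⌈M₁⌉₊ := by
              have h3 : ⌈M₁⌉₊ ≤ ⌊N⌋₊ + 1 := by omega
              push_cast [h3]; ring
          _ ≤ N + 1 - M₁ := by
              have h1 : (⌊N⌋₊ : ℝ) ≤ N := Nat.floor_le hNnonneg
              have h2 : M₁ ≤ ⌈M₁⌉₊ := Nat.le_ceil _
              linarith
      have hNM : N ≤ Real.sqrt 2 * M₁ := by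
        have hNe : N = Real.sqrt 2 * Real.sqrt (A/k) := by
          rw [hNdef, mul_div_assoc, Real.sqrt_mul (by norm_num)]
        rw [hNe]
        exact mul_le_mul_of_nonneg_left (le_max_right _ _) (Real.sqrt_nonneg 2)
      calc ∑ m ∈ s, (1/(m:ℝ)) ≤ ∑ _m ∈ s, (1/M₁) := by
            apply Finset.sum_le_sum
            intro m hm
            exact one_div_le_one_div_of_le hM₁pos (key m hm).1
        _ = s.card * (1/M₁) := by rw [Finset.sum_const, nsmul_eq_mul]
        _ ≤ (N + 1 - M₁) * (1/M₁) := by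
            apply mul_le_mul_of_nonneg_right hcard (by positivity)
        _ ≤ Real.sqrt 2 := by
            rw [mul_one_div, div_le_iff₀ hM₁pos]
            linarith
  · rw [if_neg hk2]
    apply le_of_eq
    apply Finset.sum_eq_zero
    intro m hm
    rw [Finset.mem_Icc] at hm
    have h1 : (1:ℝ) ≤ (m:ℝ) := by exact_mod_cast hm.1
    rw [if_neg]
    rintro ⟨-, h2⟩
    apply hk2
    nlinarith [mul_le_mul_of_nonneg_right (one_le_sq_iff₀ (by positivity) |>.mpr h1 : (1:ℝ) ≤ (m:ℝ)^2) (le_of_lt (lt_of_lt_of_le one_pos hk))]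

lemma count_bound (A c : ℝ) (hA : 1 ≤ A) (hc : 1 ≤ c) (B : ℕ) :
    ∑ u ∈ Finset.Icc 1 B, (if (u:ℝ)^3 * c ≤ 2*A then Real.sqrt 2 else 0)
    ≤ Real.sqrt 2 * ((2*A) ^ ((1:ℝ)/3) * c ^ (-(1:ℝ)/3)) := by
  rw [← Finset.sum_filter]
  set Y : ℝ := (2*A/c) ^ ((1:ℝ)/3) with hY
  have hcpos : 0 < c := lt_of_lt_of_le one_pos hc
  have hApos : 0 < 2*A/c := by positivity
  set t : Finset ℕ := (Finset.Icc 1 B).filter (fun u : ℕ => (u:ℝ)^3 * c ≤ 2*A) with ht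
  have hsub : t ⊆ Finset.Icc 1 ⌊Y⌋₊ := by
    intro u hu
    rw [ht, Finset.mem_filter, Finset.mem_Icc] at hu
    obtain ⟨⟨h1, _⟩, h2⟩ := hu
    rw [Finset.mem_Icc]
    refine ⟨h1, Nat.le_floor ?_⟩
    have h3 : (u:ℝ)^3 ≤ 2*A/c := by rw [le_div_iff₀ hcpos]; exact h2
    calc (u:ℝ) = ((u:ℝ)^3) ^ ((1:ℝ)/3) := by
          rw [← Real.rpow_natCast (u:ℝ) 3, ← Real.rpow_mul (by positivity)]
          norm_num
      _ ≤ Y := Real.rpow_le_rpow (by positivity) h3 (by norm_num)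
  calc ∑ _u ∈ t, Real.sqrt 2 = t.card * Real.sqrt 2 := by
        rw [Finset.sum_const, nsmul_eq_mul]
    _ ≤ (⌊Y⌋₊ : ℝ) * Real.sqrt 2 := by
        apply mul_le_mul_of_nonneg_right _ (Real.sqrt_nonneg 2)
        have h4 := Finset.card_le_card hsub
        rw [Nat.card_Icc] at h4
        have h5 : t.card ≤ ⌊Y⌋₊ := by omega
        exact_mod_cast h5
    _ ≤ Y * Real.sqrt 2 := by
        apply mul_le_mul_of_nonneg_right (Nat.floor_le (by positivity)) (Real.sqrt_nonneg 2)
    _ = Real.sqrt 2 * ((2*A) ^ ((1:ℝ)/3) * c ^ (-(1:ℝ)/3)) := by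
        rw [hY, Real.div_rpow (by positivity) hcpos.le]
        rw [div_eq_mul_inv, ← Real.rpow_neg hcpos.le]
        ring_nf

lemma term_eq {a : ℕ} (ha0 : a ≠ 0) (hsq : IsSquarefull a) :
    ((cub a : ℝ)/(a:ℝ)) ^ ((1:ℝ)/2) = 1/(MP a:ℝ) := by
  have hM : (0:ℝ) < (MP a:ℝ) := by exact_mod_cast MP_pos a
  have hc : (0:ℝ) < (cub a:ℝ) := by exact_mod_cast cub_pos a
  have hd : ((MP a:ℝ))^2 * (cub a:ℝ) = (a:ℝ) := by exact_mod_cast decomp ha0 hsq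
  have h1 : (cub a : ℝ)/(a:ℝ) = (1/(MP a:ℝ))^(2:ℕ) := by
    rw [← hd]; field_simp
  rw [h1, ← Real.rpow_natCast (1/(MP a:ℝ)) 2, ← Real.rpow_mul (by positivity)]
  norm_num

/-- `Σ_{a square-full, A ≤ a ≤ 2A} (cub(a)/a)^{1/2} ≤ C · A^{1/3}`. -/
theorem squarefull_cubfull_sum_bound :
    ∃ C : ℝ, ∀ A : ℝ, 1 ≤ A →
      ∑ a ∈ (Finset.Icc ⌈A⌉₊ ⌊2 * A⌋₊).filter IsSquarefull,
          ((cub a : ℝ) / (a : ℝ)) ^ ((1 : ℝ) / 2) ≤ C * A ^ ((1 : ℝ) / 3) := by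
  refine ⟨Real.sqrt 2 * 2 ^ ((1:ℝ)/3) * (∑' v : ℕ, (v:ℝ) ^ (-(4:ℝ)/3)) *
    (∑' w : ℕ, (w:ℝ) ^ (-(5:ℝ)/3)), fun A hA => ?_⟩
  have hA0 : (0:ℝ) ≤ A := by linarith
  set B := ⌊2 * A⌋₊ with hB
  set s := (Finset.Icc ⌈A⌉₊ B).filter IsSquarefull with hs
  have hmem : ∀ a ∈ s, a ≠ 0 ∧ IsSquarefull a ∧ ⌈A⌉₊ ≤ a ∧ a ≤ B := by
    intro a ha
    rw [hs, Finset.mem_filter, Finset.mem_Icc] at ha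
    have : 1 ≤ ⌈A⌉₊ := Nat.one_le_ceil_iff.mpr (by linarith)
    exact ⟨by omega, ha.2, ha.1.1, ha.1.2⟩
  -- step 1 : rewrite terms
  have step1 : ∑ a ∈ s, ((cub a : ℝ) / (a : ℝ)) ^ ((1 : ℝ) / 2)
      = ∑ a ∈ s, 1/(MP a:ℝ) := by
    apply Finset.sum_congr rfl
    intro a ha
    exact term_eq (hmem a ha).1 (hmem a ha).2.1
  -- the injection
  set φ : ℕ → ℕ × ℕ × ℕ × ℕ := fun a => (VP a, WP a, UP a, MP a) with hφ
  have hrecon : ∀ a ∈ s, (MP a)^2 * ((UP a)^3 * ((VP a)^4 * (WP a)^5)) = a := by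
    intro a ha
    conv_rhs => rw [← decomp (hmem a ha).1 (hmem a ha).2.1, ← cub_eq]
    ring
  have hinj : ∀ x ∈ s, ∀ y ∈ s, φ x = φ y → x = y := by
    intro x hx y hy hxy
    rw [hφ] at hxy
    simp only [Prod.mk.injEq] at hxy
    rw [← hrecon x hx, ← hrecon y hy, hxy.1, hxy.2.1, hxy.2.2.1, hxy.2.2.2]
  have step2 : ∑ a ∈ s, 1/(MP a:ℝ) = ∑ q ∈ s.image φ, 1/(q.2.2.2:ℝ) := by
    rw [Finset.sum_image hinj]
  -- the target set
  set P : ℕ × ℕ × ℕ × ℕ → Prop := fun q =>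
    A ≤ (q.2.2.2:ℝ)^2 * ((q.2.2.1:ℝ)^3 * ((q.1:ℝ)^4 * (q.2.1:ℝ)^5)) ∧
    (q.2.2.2:ℝ)^2 * ((q.2.2.1:ℝ)^3 * ((q.1:ℝ)^4 * (q.2.1:ℝ)^5)) ≤ 2*A with hP
  set box : Finset (ℕ × ℕ × ℕ × ℕ) :=
    Finset.Icc 1 B ×ˢ (Finset.Icc 1 B ×ˢ (Finset.Icc 1 B ×ˢ Finset.Icc 1 B)) with hbox
  have hsubset : s.image φ ⊆ box.filter P := by
    intro q hq
    rw [Finset.mem_image] at hq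
    obtain ⟨a, ha, rfl⟩ := hq
    obtain ⟨ha0, hasq, haA, haB⟩ := hmem a ha
    have hle : ∀ x : ℕ, 1 ≤ x → x ∣ 0 ∨ True := fun _ _ => Or.inr trivial
    -- each component ≤ a
    have hMa : MP a ≤ a := by
      calc MP a ≤ MP a ^ 2 := Nat.le_self_pow two_ne_zero _
        _ ≤ MP a ^ 2 * cub a := Nat.le_mul_of_pos_right _ (cub_pos a)
        _ = a := decomp ha0 hasq
    have hcuba : cub a ≤ a := by
      calc cub a ≤ MP a ^ 2 * cub a :=
            Nat.le_mul_of_pos_left _ (pow_pos (MP_pos a) 2)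
        _ = a := decomp ha0 hasq
    have hUa : UP a ≤ a := by
      calc UP a ≤ UP a ^ 3 := Nat.le_self_pow three_ne_zero _
        _ ≤ UP a ^ 3 * VP a ^ 4 := Nat.le_mul_of_pos_right _ (pow_pos (VP_pos a) 4)
        _ ≤ UP a ^ 3 * VP a ^ 4 * WP a ^ 5 := Nat.le_mul_of_pos_right _ (pow_pos (WP_pos a) 5)
        _ = cub a := cub_eq a
        _ ≤ a := hcuba
    have hVa : VP a ≤ a := by
      calc VP a ≤ VP a ^ 4 := Nat.le_self_pow (by norm_num) _
        _ ≤ UP a ^ 3 * VP a ^ 4 := Nat.le_mul_of_pos_left _ (pow_pos (UP_pos a) 3)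
        _ ≤ UP a ^ 3 * VP a ^ 4 * WP a ^ 5 := Nat.le_mul_of_pos_right _ (pow_pos (WP_pos a) 5)
        _ = cub a := cub_eq a
        _ ≤ a := hcuba
    have hWa : WP a ≤ a := by
      calc WP a ≤ WP a ^ 5 := Nat.le_self_pow (by norm_num) _
        _ ≤ UP a ^ 3 * VP a ^ 4 * WP a ^ 5 := Nat.le_mul_of_pos_left _ (mul_pos (pow_pos (UP_pos a) 3) (pow_pos (VP_pos a) 4))
        _ = cub a := cub_eq a
        _ ≤ a := hcuba
    rw [Finset.mem_filter]
    constructor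
    · rw [hbox]
      simp only [Finset.mem_product, Finset.mem_Icc, hφ]
      exact ⟨⟨VP_pos a, le_trans hVa haB⟩, ⟨WP_pos a, le_trans hWa haB⟩,
        ⟨UP_pos a, le_trans hUa haB⟩, ⟨MP_pos a, le_trans hMa haB⟩⟩
    · rw [hP]
      have hra : ((MP a:ℝ))^2 * ((UP a:ℝ)^3 * ((VP a:ℝ)^4 * (WP a:ℝ)^5)) = (a:ℝ) := by
        exact_mod_cast hrecon a ha
      simp only [hφ]
      rw [hra]
      constructor
      · calc A ≤ (⌈A⌉₊:ℝ) := Nat.le_ceil A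
          _ ≤ (a:ℝ) := by exact_mod_cast haA
      · calc (a:ℝ) ≤ (B:ℝ) := by exact_mod_cast haB
          _ ≤ 2*A := Nat.floor_le (by linarith)
  have step3 : ∑ q ∈ s.image φ, 1/(q.2.2.2:ℝ) ≤ ∑ q ∈ box.filter P, 1/(q.2.2.2:ℝ) :=
    Finset.sum_le_sum_of_subset_of_nonneg hsubset (fun q _ _ => by positivity)
  -- expand to iterated sums
  have step4 : ∑ q ∈ box.filter P, 1/(q.2.2.2:ℝ)
      = ∑ v ∈ Finset.Icc 1 B, ∑ w ∈ Finset.Icc 1 B, ∑ u ∈ Finset.Icc 1 B,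
          ∑ m ∈ Finset.Icc 1 B,
          (if A ≤ (m:ℝ)^2 * ((u:ℝ)^3 * ((v:ℝ)^4 * (w:ℝ)^5)) ∧
              (m:ℝ)^2 * ((u:ℝ)^3 * ((v:ℝ)^4 * (w:ℝ)^5)) ≤ 2*A
           then 1/(m:ℝ) else 0) := by
    rw [Finset.sum_filter, hbox]
    simp only [Finset.sum_product, hP]
  have step5 : ∑ v ∈ Finset.Icc 1 B, ∑ w ∈ Finset.Icc 1 B, ∑ u ∈ Finset.Icc 1 B,
          ∑ m ∈ Finset.Icc 1 B,
          (if A ≤ (m:ℝ)^2 * ((u:ℝ)^3 * ((v:ℝ)^4 * (w:ℝ)^5)) ∧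
              (m:ℝ)^2 * ((u:ℝ)^3 * ((v:ℝ)^4 * (w:ℝ)^5)) ≤ 2*A
           then 1/(m:ℝ) else 0)
      ≤ ∑ v ∈ Finset.Icc 1 B, ∑ w ∈ Finset.Icc 1 B, ∑ u ∈ Finset.Icc 1 B,
          (if (u:ℝ)^3 * ((v:ℝ)^4 * (w:ℝ)^5) ≤ 2*A then Real.sqrt 2 else 0) := by
    apply Finset.sum_le_sum; intro v hv
    apply Finset.sum_le_sum; intro w hw
    apply Finset.sum_le_sum; intro u hu
    have h1 : (1:ℝ) ≤ (u:ℝ)^3 * ((v:ℝ)^4 * (w:ℝ)^5) := by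
      rw [Finset.mem_Icc] at hv hw hu
      have hu' : (1:ℝ) ≤ (u:ℝ) := by exact_mod_cast hu.1
      have hv' : (1:ℝ) ≤ (v:ℝ) := by exact_mod_cast hv.1
      have hw' : (1:ℝ) ≤ (w:ℝ) := by exact_mod_cast hw.1
      have h1u : (1:ℝ) ≤ (u:ℝ)^3 := one_le_pow₀ hu'
      have h1v : (1:ℝ) ≤ (v:ℝ)^4 := one_le_pow₀ hv'
      have h1w : (1:ℝ) ≤ (w:ℝ)^5 := one_le_pow₀ hw'
      have h2 : (1:ℝ) ≤ (v:ℝ)^4 * (w:ℝ)^5 := by nlinarith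
      nlinarith
    exact inner_bound A _ hA h1 B
  have step6 : ∑ v ∈ Finset.Icc 1 B, ∑ w ∈ Finset.Icc 1 B, ∑ u ∈ Finset.Icc 1 B,
          (if (u:ℝ)^3 * ((v:ℝ)^4 * (w:ℝ)^5) ≤ 2*A then Real.sqrt 2 else 0)
      ≤ ∑ v ∈ Finset.Icc 1 B, ∑ w ∈ Finset.Icc 1 B,
          Real.sqrt 2 * ((2*A) ^ ((1:ℝ)/3) * ((v:ℝ)^4 * (w:ℝ)^5) ^ (-(1:ℝ)/3)) := by
    apply Finset.sum_le_sum; intro v hv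
    apply Finset.sum_le_sum; intro w hw
    rw [Finset.mem_Icc] at hv hw
    have hv' : (1:ℝ) ≤ (v:ℝ) := by exact_mod_cast hv.1
    have hw' : (1:ℝ) ≤ (w:ℝ) := by exact_mod_cast hw.1
    have hc : (1:ℝ) ≤ (v:ℝ)^4 * (w:ℝ)^5 := by
      have h1v : (1:ℝ) ≤ (v:ℝ)^4 := one_le_pow₀ hv'
      have h1w : (1:ℝ) ≤ (w:ℝ)^5 := one_le_pow₀ hw'
      nlinarith
    exact count_bound A _ hA hc B
  have hsplit : ∀ v ∈ Finset.Icc 1 B, ∀ w ∈ Finset.Icc 1 B,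
      ((v:ℝ)^4 * (w:ℝ)^5) ^ (-(1:ℝ)/3) = (v:ℝ)^(-(4:ℝ)/3) * (w:ℝ)^(-(5:ℝ)/3) := by
    intro v hv w hw
    rw [Finset.mem_Icc] at hv hw
    have hv0 : (0:ℝ) < (v:ℝ) := by exact_mod_cast hv.1
    have hw0 : (0:ℝ) < (w:ℝ) := by exact_mod_cast hw.1
    rw [Real.mul_rpow (by positivity) (by positivity),
      ← Real.rpow_natCast (v:ℝ) 4, ← Real.rpow_natCast (w:ℝ) 5,
      ← Real.rpow_mul hv0.le, ← Real.rpow_mul hw0.le]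
    norm_num
  set S1 : ℝ := ∑ v ∈ Finset.Icc 1 B, (v:ℝ)^(-(4:ℝ)/3) with hS1def
  set S2 : ℝ := ∑ w ∈ Finset.Icc 1 B, (w:ℝ)^(-(5:ℝ)/3) with hS2def
  set T1 : ℝ := ∑' v : ℕ, (v:ℝ) ^ (-(4:ℝ)/3) with hT1def
  set T2 : ℝ := ∑' w : ℕ, (w:ℝ) ^ (-(5:ℝ)/3) with hT2def
  have hsum1 : Summable (fun v : ℕ => (v:ℝ) ^ (-(4:ℝ)/3)) :=
    Real.summable_nat_rpow.mpr (by norm_num)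
  have hsum2 : Summable (fun w : ℕ => (w:ℝ) ^ (-(5:ℝ)/3)) :=
    Real.summable_nat_rpow.mpr (by norm_num)
  have hS1 : S1 ≤ T1 := Summable.sum_le_tsum _ (fun i _ => Real.rpow_nonneg (Nat.cast_nonneg i) _) hsum1
  have hS2 : S2 ≤ T2 := Summable.sum_le_tsum _ (fun i _ => Real.rpow_nonneg (Nat.cast_nonneg i) _) hsum2
  have hS1n : 0 ≤ S1 := Finset.sum_nonneg fun i _ => Real.rpow_nonneg (Nat.cast_nonneg i) _
  have hS2n : 0 ≤ S2 := Finset.sum_nonneg fun i _ => Real.rpow_nonneg (Nat.cast_nonneg i) _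
  have hT1n : 0 ≤ T1 := le_trans hS1n hS1
  have hT2n : 0 ≤ T2 := le_trans hS2n hS2
  have step7 : ∑ v ∈ Finset.Icc 1 B, ∑ w ∈ Finset.Icc 1 B,
          Real.sqrt 2 * ((2*A) ^ ((1:ℝ)/3) * ((v:ℝ)^4 * (w:ℝ)^5) ^ (-(1:ℝ)/3))
      = Real.sqrt 2 * (2*A) ^ ((1:ℝ)/3) * S1 * S2 := by
    rw [hS1def, hS2def, mul_assoc, Finset.sum_mul_sum, Finset.mul_sum]
    apply Finset.sum_congr rfl
    intro v hv
    conv_rhs => rw [Finset.mul_sum]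
    apply Finset.sum_congr rfl
    intro w hw
    rw [hsplit v hv w hw]
    ring
  have hfin : Real.sqrt 2 * (2*A) ^ ((1:ℝ)/3) * S1 * S2
      ≤ Real.sqrt 2 * 2 ^ ((1:ℝ)/3) * T1 * T2 * A ^ ((1:ℝ)/3) := by
    have h2A : (2*A) ^ ((1:ℝ)/3) = 2 ^ ((1:ℝ)/3) * A ^ ((1:ℝ)/3) :=
      Real.mul_rpow (by norm_num) hA0
    rw [h2A]
    have hKn : 0 ≤ Real.sqrt 2 * (2 ^ ((1:ℝ)/3) * A ^ ((1:ℝ)/3)) := by positivity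
    calc Real.sqrt 2 * (2 ^ ((1:ℝ)/3) * A ^ ((1:ℝ)/3)) * S1 * S2
        ≤ Real.sqrt 2 * (2 ^ ((1:ℝ)/3) * A ^ ((1:ℝ)/3)) * T1 * T2 := by
          apply mul_le_mul (mul_le_mul le_rfl hS1 hS1n hKn) hS2 hS2n
          positivity
      _ = Real.sqrt 2 * 2 ^ ((1:ℝ)/3) * T1 * T2 * A ^ ((1:ℝ)/3) := by ring
  calc ∑ a ∈ s, ((cub a : ℝ) / (a : ℝ)) ^ ((1 : ℝ) / 2)
      = ∑ q ∈ s.image φ, 1/(q.2.2.2:ℝ) := by rw [step1, step2]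
    _ ≤ ∑ q ∈ box.filter P, 1/(q.2.2.2:ℝ) := step3
    _ ≤ Real.sqrt 2 * (2*A) ^ ((1:ℝ)/3) * S1 * S2 := by
        rw [step4, ← step7]
        exact le_trans step5 step6
    _ ≤ Real.sqrt 2 * 2 ^ ((1:ℝ)/3) * T1 * T2 * A ^ ((1:ℝ)/3) := hfin
end

section
/- For every ε > 0 there is a constant C_ε such that for every nonzero integer G and every real N ≥ 1, the number of positive integers u ≤ N with rad(u) dividing G is at most C_ε · (N·|G|)^ε. -/
open Classical

/-- The radical of `n`: the product of the distinct primes dividing `n`. -/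
def rad (n : ℕ) : ℕ := ∏ p ∈ n.primeFactors, p

/-- The completely multiplicative function `n ↦ n ^ (-ε)`. -/
noncomputable def radAux (ε : ℝ) : ℕ →* ℝ where
  toFun n := (n : ℝ) ^ (-ε)
  map_one' := by simp
  map_mul' m n := by
    push_cast
    exact Real.mul_rpow (Nat.cast_nonneg m) (Nat.cast_nonneg n)

lemma radAux_apply (ε : ℝ) (n : ℕ) : radAux ε n = (n : ℝ) ^ (-ε) := rfl

lemma radAux_nonneg (ε : ℝ) (n : ℕ) : 0 ≤ radAux ε n :=
  Real.rpow_nonneg (Nat.cast_nonneg n) _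

/-- The Euler factor bound: the product over primes in `P` of `(1 - p^{-ε})⁻¹` is at most
a constant (depending on `ε` only) times `∏ p ∈ P, p ^ ε`. -/
lemma rad_prod_bound (ε : ℝ) (hε : 0 < ε) :
    ∃ C : ℝ, 0 ≤ C ∧ ∀ P : Finset ℕ, (∀ p ∈ P, p.Prime) →
      ∏ p ∈ P, (1 - (p : ℝ) ^ (-ε))⁻¹ ≤ C * ∏ p ∈ P, (p : ℝ) ^ ε := by
  classical
  set D : ℝ := max 1 (1 - (2 : ℝ) ^ (-ε))⁻¹ with hD
  set B : ℕ := ⌈(2 : ℝ) ^ ε⁻¹⌉₊ + 1 with hB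
  have hD1 : (1 : ℝ) ≤ D := le_max_left _ _
  have h2lt : (2 : ℝ) ^ (-ε) < 1 :=
    Real.rpow_lt_one_of_one_lt_of_neg one_lt_two (neg_neg_of_pos hε)
  have h2pos : (0 : ℝ) < 1 - (2 : ℝ) ^ (-ε) := by linarith
  refine ⟨D ^ B, pow_nonneg (by linarith) _, ?_⟩
  intro P hP
  -- basic facts about primes in P
  have hpfacts : ∀ p ∈ P, (2 : ℝ) ≤ (p : ℝ) ∧ (p : ℝ) ^ (-ε) ≤ (2 : ℝ) ^ (-ε) ∧
      (0 : ℝ) < 1 - (p : ℝ) ^ (-ε) := by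
    intro p hp
    have h2p : (2 : ℝ) ≤ (p : ℝ) := by exact_mod_cast (hP p hp).two_le
    have hle : (p : ℝ) ^ (-ε) ≤ (2 : ℝ) ^ (-ε) := by
      rw [Real.rpow_neg (by norm_num), Real.rpow_neg (by linarith)]
      apply inv_anti₀ (Real.rpow_pos_of_pos (by norm_num) _)
      exact Real.rpow_le_rpow (by norm_num) h2p hε.le
    exact ⟨h2p, hle, by linarith⟩
  rw [← Finset.prod_filter_mul_prod_filter_not P (fun p : ℕ => (p : ℝ) ^ ε < 2)]
  -- the small primes contribute at most `D ^ B`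
  have hbound1 : ∏ p ∈ P.filter (fun p : ℕ => (p : ℝ) ^ ε < 2), (1 - (p : ℝ) ^ (-ε))⁻¹ ≤ D ^ B := by
    have hcard : (P.filter (fun p : ℕ => (p : ℝ) ^ ε < 2)).card ≤ B := by
      have hsub : P.filter (fun p : ℕ => (p : ℝ) ^ ε < 2) ⊆ Finset.range B := by
        intro p hp
        rw [Finset.mem_filter] at hp
        have h0p : (0 : ℝ) ≤ (p : ℝ) := Nat.cast_nonneg p
        have hp2 : (p : ℝ) < (2 : ℝ) ^ ε⁻¹ := by
          have h := Real.rpow_lt_rpow (Real.rpow_nonneg h0p ε) hp.2 (inv_pos.mpr hε)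
          rwa [← Real.rpow_mul h0p, mul_inv_cancel₀ hε.ne', Real.rpow_one] at h
        have hlt : (p : ℝ) < (B : ℝ) := by
          rw [hB]
          push_cast
          linarith [Nat.le_ceil ((2 : ℝ) ^ ε⁻¹)]
        rw [Finset.mem_range]
        exact_mod_cast hlt
      calc (P.filter (fun p : ℕ => (p : ℝ) ^ ε < 2)).card
          ≤ (Finset.range B).card := Finset.card_le_card hsub
        _ = B := Finset.card_range _
    calc ∏ p ∈ P.filter (fun p : ℕ => (p : ℝ) ^ ε < 2), (1 - (p : ℝ) ^ (-ε))⁻¹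
        ≤ ∏ _p ∈ P.filter (fun p : ℕ => (p : ℝ) ^ ε < 2), D := by
          apply Finset.prod_le_prod
          · intro p hp
            exact (inv_nonneg).mpr (hpfacts p (Finset.mem_filter.mp hp).1).2.2.le
          · intro p hp
            have h := hpfacts p (Finset.mem_filter.mp hp).1
            refine le_trans ?_ (le_max_right 1 _)
            exact inv_anti₀ h2pos (by linarith [h.2.1])
      _ = D ^ (P.filter (fun p : ℕ => (p : ℝ) ^ ε < 2)).card := Finset.prod_const D
      _ ≤ D ^ B := pow_le_pow_right₀ hD1 hcard
  -- the large primes contribute at most `∏ p ^ ε`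
  have hbound2 : ∏ p ∈ P.filter (fun p : ℕ => ¬ (p : ℝ) ^ ε < 2), (1 - (p : ℝ) ^ (-ε))⁻¹ ≤
      ∏ p ∈ P.filter (fun p : ℕ => ¬ (p : ℝ) ^ ε < 2), (p : ℝ) ^ ε := by
    apply Finset.prod_le_prod
    · intro p hp
      exact (inv_nonneg).mpr (hpfacts p (Finset.mem_filter.mp hp).1).2.2.le
    · intro p hp
      rw [Finset.mem_filter] at hp
      have h := hpfacts p hp.1
      have h2 : (2 : ℝ) ≤ (p : ℝ) ^ ε := not_lt.mp hp.2
      have hppos : (0 : ℝ) < (p : ℝ) ^ ε := by linarith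
      rw [inv_le_iff_one_le_mul₀ h.2.2]
      have hinv : (p : ℝ) ^ (-ε) * (p : ℝ) ^ ε = 1 := by
        rw [Real.rpow_neg (by linarith [h.1]), inv_mul_cancel₀ hppos.ne']
      calc (1 : ℝ) ≤ (p : ℝ) ^ ε - 1 := by linarith
        _ = (p : ℝ) ^ ε * (1 - (p : ℝ) ^ (-ε)) := by rw [mul_sub, mul_one, mul_comm, hinv]
  -- combine
  have hnonneg2 : (0 : ℝ) ≤ ∏ p ∈ P.filter (fun p : ℕ => ¬ (p : ℝ) ^ ε < 2), (1 - (p : ℝ) ^ (-ε))⁻¹ :=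
    Finset.prod_nonneg fun p hp =>
      (inv_nonneg).mpr (hpfacts p (Finset.mem_filter.mp hp).1).2.2.le
  have hsub : ∏ p ∈ P.filter (fun p : ℕ => ¬ (p : ℝ) ^ ε < 2), (p : ℝ) ^ ε ≤ ∏ p ∈ P, (p : ℝ) ^ ε := by
    have hone : ∀ p ∈ P, (1 : ℝ) ≤ (p : ℝ) ^ ε := by
      intro p hp
      apply Real.one_le_rpow ?_ hε.le
      exact_mod_cast (hP p hp).one_lt.le
    rw [← Finset.prod_filter_mul_prod_filter_not P (fun p : ℕ => (p : ℝ) ^ ε < 2)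
      (fun p => (p : ℝ) ^ ε)]
    apply le_mul_of_one_le_left
    · exact Finset.prod_nonneg fun p hp => Real.rpow_nonneg (Nat.cast_nonneg p) ε
    · calc (1:ℝ) = ∏ _p ∈ P.filter (fun p : ℕ => (p : ℝ) ^ ε < 2), (1:ℝ) := by simp
        _ ≤ ∏ p ∈ P.filter (fun p : ℕ => (p : ℝ) ^ ε < 2), (p : ℝ) ^ ε :=
          Finset.prod_le_prod (fun _ _ => zero_le_one)
            (fun p hp => hone p (Finset.mem_filter.mp hp).1)
  calc (∏ p ∈ P.filter (fun p : ℕ => (p : ℝ) ^ ε < 2), (1 - (p : ℝ) ^ (-ε))⁻¹) *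
        ∏ p ∈ P.filter (fun p : ℕ => ¬ (p : ℝ) ^ ε < 2), (1 - (p : ℝ) ^ (-ε))⁻¹
      ≤ D ^ B * ∏ p ∈ P.filter (fun p : ℕ => ¬ (p : ℝ) ^ ε < 2), (p : ℝ) ^ ε := by
        apply mul_le_mul hbound1 hbound2 hnonneg2 (by positivity)
    _ ≤ D ^ B * ∏ p ∈ P, (p : ℝ) ^ ε := by
        apply mul_le_mul_of_nonneg_left hsub (by positivity)

/-- The number of `u ≤ N` with `rad(u) ∣ G` is at most `C_ε (N|G|)^ε`. -/
theorem radical_divisor_count_bound (ε : ℝ) (hε : 0 < ε) :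
    ∃ C : ℝ, ∀ G : ℤ, G ≠ 0 → ∀ N : ℝ, 1 ≤ N →
      (((Finset.Icc 1 ⌊N⌋₊).filter (fun u => (rad u : ℤ) ∣ G)).card : ℝ) ≤
        C * (N * (G.natAbs : ℝ)) ^ ε := by
  classical
  obtain ⟨C, hC0, hC⟩ := rad_prod_bound ε hε
  refine ⟨C, ?_⟩
  intro G hG N hN
  set P : Finset ℕ := G.natAbs.primeFactors with hPdef
  set S : Finset ℕ := (Finset.Icc 1 ⌊N⌋₊).filter (fun u => (rad u : ℤ) ∣ G) with hSdef
  have hGa : G.natAbs ≠ 0 := Int.natAbs_ne_zero.mpr hG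
  have hPprime : ∀ p ∈ P, p.Prime := fun p hp => Nat.prime_of_mem_primeFactors hp
  -- every element of S is a P-factored number
  have hSsub : ∀ u ∈ S, u ∈ Nat.factoredNumbers P := by
    intro u hu
    rw [hSdef, Finset.mem_filter, Finset.mem_Icc] at hu
    have hu0 : u ≠ 0 := by omega
    refine Nat.mem_factoredNumbers_of_primeFactors_subset hu0 ?_
    intro p hp
    have hpu : p.Prime ∧ p ∣ u := by
      have := Nat.mem_primeFactors.mp hp
      exact ⟨this.1, this.2.1⟩
    have hprad : p ∣ rad u := Finset.dvd_prod_of_mem _ hp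
    have hpG : (p : ℤ) ∣ G := dvd_trans (Int.natCast_dvd_natCast.mpr hprad) hu.2
    have hpGa : p ∣ G.natAbs := Int.natCast_dvd.mp hpG
    exact Nat.mem_primeFactors.mpr ⟨hpu.1, hpGa, hGa⟩
  -- norm of f p < 1 for primes p
  have hlt : ∀ {p : ℕ}, p.Prime → ‖radAux ε p‖ < 1 := by
    intro p hp
    rw [radAux_apply, Real.norm_eq_abs, abs_of_nonneg (Real.rpow_nonneg (Nat.cast_nonneg p) _)]
    exact Real.rpow_lt_one_of_one_lt_of_neg (by exact_mod_cast hp.one_lt) (neg_neg_of_pos hε)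
  have hsum := (EulerProduct.summable_and_hasSum_factoredNumbers_prod_filter_prime_geometric
    (f := radAux ε) hlt P).2
  -- the Euler product over P
  have hfilterP : P.filter Nat.Prime = P := Finset.filter_true_of_mem hPprime
  -- ∑_{u ∈ S} u^{-ε} ≤ ∏_{p ∈ P} (1 - p^{-ε})⁻¹
  have key : ∑ u ∈ S, (u : ℝ) ^ (-ε) ≤ ∏ p ∈ P, (1 - (p : ℝ) ^ (-ε))⁻¹ := by
    have h1 := sum_le_hasSum (S.subtype (· ∈ Nat.factoredNumbers P))
      (fun i _ => radAux_nonneg ε i) hsum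
    rw [Finset.sum_subtype_eq_sum_filter] at h1
    have hfilt : S.filter (· ∈ Nat.factoredNumbers P) = S := Finset.filter_true_of_mem hSsub
    rw [hfilt] at h1
    calc ∑ u ∈ S, (u : ℝ) ^ (-ε) = ∑ u ∈ S, radAux ε u := by
          simp [radAux_apply]
      _ ≤ ∏ p ∈ P.filter Nat.Prime, (1 - radAux ε p)⁻¹ := h1
      _ = ∏ p ∈ P, (1 - (p : ℝ) ^ (-ε))⁻¹ := by rw [hfilterP]; simp [radAux_apply]
  -- counting: card ≤ N^ε * ∑ u^{-ε}
  have hNpos : (0 : ℝ) < N := lt_of_lt_of_le one_pos hN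
  have hcard : (S.card : ℝ) ≤ N ^ ε * ∑ u ∈ S, (u : ℝ) ^ (-ε) := by
    rw [Finset.mul_sum]
    calc (S.card : ℝ) = ∑ _u ∈ S, (1 : ℝ) := by simp
      _ ≤ ∑ u ∈ S, N ^ ε * (u : ℝ) ^ (-ε) := by
          apply Finset.sum_le_sum
          intro u hu
          rw [hSdef, Finset.mem_filter, Finset.mem_Icc] at hu
          have hu1 : (1 : ℝ) ≤ (u : ℝ) := by exact_mod_cast hu.1.1
          have huN : (u : ℝ) ≤ N := by
            calc (u : ℝ) ≤ (⌊N⌋₊ : ℝ) := by exact_mod_cast hu.1.2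
              _ ≤ N := Nat.floor_le hNpos.le
          have hup : (0 : ℝ) < (u : ℝ) ^ ε := Real.rpow_pos_of_pos (by linarith) ε
          have hle : (u : ℝ) ^ ε ≤ N ^ ε := Real.rpow_le_rpow (by linarith) huN hε.le
          rw [Real.rpow_neg (by linarith), ← div_eq_mul_inv]
          exact (one_le_div hup).mpr hle
  -- the radical bound: ∏_{p ∈ P} p^ε ≤ |G|^ε
  have hradG : ∏ p ∈ P, (p : ℝ) ^ ε ≤ (G.natAbs : ℝ) ^ ε := by
    rw [Real.finset_prod_rpow P _ (fun p _ => Nat.cast_nonneg p) ε]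
    apply Real.rpow_le_rpow (Finset.prod_nonneg fun p _ => Nat.cast_nonneg p) ?_ hε.le
    have hdvd : ∏ p ∈ P, p ∣ G.natAbs := Nat.prod_primeFactors_dvd G.natAbs
    have := Nat.le_of_dvd (Nat.pos_of_ne_zero hGa) hdvd
    rw [← Nat.cast_prod]
    exact_mod_cast this
  -- put everything together
  have hGa1 : (1 : ℝ) ≤ (G.natAbs : ℝ) := by
    exact_mod_cast Nat.one_le_iff_ne_zero.mpr hGa
  have hNe : (0 : ℝ) ≤ N ^ ε := Real.rpow_nonneg hNpos.le ε
  calc (S.card : ℝ) ≤ N ^ ε * ∑ u ∈ S, (u : ℝ) ^ (-ε) := hcard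
    _ ≤ N ^ ε * ∏ p ∈ P, (1 - (p : ℝ) ^ (-ε))⁻¹ := by
        exact mul_le_mul_of_nonneg_left key hNe
    _ ≤ N ^ ε * (C * ∏ p ∈ P, (p : ℝ) ^ ε) := by
        exact mul_le_mul_of_nonneg_left (hC P hPprime) hNe
    _ ≤ N ^ ε * (C * (G.natAbs : ℝ) ^ ε) := by
        apply mul_le_mul_of_nonneg_left (mul_le_mul_of_nonneg_left hradG hC0) hNe
    _ = C * (N * (G.natAbs : ℝ)) ^ ε := by
        rw [Real.mul_rpow hNpos.le (by linarith)]
        ring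
end

section
/- For every ε ∈ (0,1) there is a constant C_ε such that for all real D ≥ 1, Σ_{d ≤ D} rad(d)^{ε−1} ≤ C_ε · D^{3ε}, where rad(d) is the radical of d. -/
private lemma rad_aux_sum_le_prod_sum (N : ℕ) (h : ℕ → ℕ → ℝ)
    (h0 : ∀ p, h p 0 = 1) (hnn : ∀ p a, 0 ≤ h p a) :
    ∑ d ∈ Finset.Icc 1 N, ∏ p ∈ d.primeFactors, h p (d.factorization p)
      ≤ ∏ p ∈ Finset.filter Nat.Prime (Finset.range (N+1)),
          ∑ a ∈ Finset.range (N+1), h p a := by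
  classical
  set P := Finset.filter Nat.Prime (Finset.range (N+1)) with hP
  have hsub : ∀ d ∈ Finset.Icc 1 N, d.primeFactors ⊆ P := by
    intro d hd p hp
    simp only [Finset.mem_Icc] at hd
    rw [hP, Finset.mem_filter, Finset.mem_range]
    refine ⟨?_, Nat.prime_of_mem_primeFactors hp⟩
    have := Nat.le_of_mem_primeFactors hp
    omega
  have hrw : ∀ d ∈ Finset.Icc 1 N,
      ∏ p ∈ d.primeFactors, h p (d.factorization p)
        = ∏ x ∈ P.attach, h ↑x (d.factorization ↑x) := by
    intro d hd
    rw [Finset.prod_attach P (fun p => h p (d.factorization p))]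
    refine Finset.prod_subset (hsub d hd) ?_
    intro p _ hpd
    have hz : d.factorization p = 0 := by
      rw [← Finsupp.notMem_support_iff, Nat.support_factorization]; exact hpd
    rw [hz, h0]
  have hdne : ∀ d ∈ Finset.Icc 1 N, d ≠ 0 := by
    intro d hd; simp only [Finset.mem_Icc] at hd; omega
  calc ∑ d ∈ Finset.Icc 1 N, ∏ p ∈ d.primeFactors, h p (d.factorization p)
      = ∑ d ∈ Finset.Icc 1 N, ∏ x ∈ P.attach, h ↑x (d.factorization ↑x) :=
        Finset.sum_congr rfl hrw
    _ = ∑ t ∈ (Finset.Icc 1 N).image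
          (fun d => (fun p (_ : p ∈ P) => d.factorization p)),
            ∏ x ∈ P.attach, h ↑x (t ↑x x.2) := by
        rw [Finset.sum_image]
        intro d hd d' hd' heq
        have hfeq : d.factorization = d'.factorization := by
          ext q
          by_cases hq : q ∈ P
          · exact congrFun (congrFun heq q) hq
          · have h1 : d.factorization q = 0 := by
              rw [← Finsupp.notMem_support_iff, Nat.support_factorization]
              exact fun hmem => hq (hsub d hd hmem)
            have h2 : d'.factorization q = 0 := by
              rw [← Finsupp.notMem_support_iff, Nat.support_factorization]
              exact fun hmem => hq (hsub d' hd' hmem)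
            rw [h1, h2]
        exact Nat.factorization_inj (hdne d hd) (hdne d' hd') hfeq
    _ ≤ ∑ t ∈ P.pi (fun _ => Finset.range (N+1)),
          ∏ x ∈ P.attach, h ↑x (t ↑x x.2) := by
        refine Finset.sum_le_sum_of_subset_of_nonneg ?_ ?_
        · intro t ht
          simp only [Finset.mem_image] at ht
          obtain ⟨d, hd, rfl⟩ := ht
          rw [Finset.mem_pi]
          intro p _
          rw [Finset.mem_range]
          have h1 := Nat.factorization_lt p (hdne d hd)
          simp only [Finset.mem_Icc] at hd
          omega
        · intro t _ _
          exact Finset.prod_nonneg fun x _ => hnn _ _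
    _ = ∏ p ∈ P, ∑ a ∈ Finset.range (N+1), h p a := (Finset.prod_sum _ _ _).symm

private lemma rad_rpow_eq (ε : ℝ) (d : ℕ) (hd : d ≠ 0) :
    (rad d : ℝ) ^ (ε - 1) * (d:ℝ) ^ (-(2*ε)) =
      ∏ p ∈ d.primeFactors,
        ((p:ℝ) ^ (ε-1) * (((p:ℝ) ^ (d.factorization p)) ^ (-(2*ε)))) := by
  rw [Finset.prod_mul_distrib]
  congr 1
  · rw [rad]; push_cast
    exact (Real.finset_prod_rpow d.primeFactors (fun p => (p:ℝ))
      (fun p _ => Nat.cast_nonneg p) (ε-1)).symm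
  · have hdprod : (d:ℝ) = ∏ p ∈ d.primeFactors, (p:ℝ) ^ (d.factorization p) := by
      conv_lhs => rw [← Nat.factorization_prod_pow_eq_self hd]
      rw [Finsupp.prod, Nat.support_factorization]
      push_cast
      rfl
    rw [hdprod]
    exact (Real.finset_prod_rpow _ _ (fun p _ => by positivity) _).symm

/-- `Σ_{d ≤ D} rad(d)^{ε−1} ≤ C_ε D^{3ε}` for `0 < ε < 1`. -/
theorem radical_power_sum_bound (ε : ℝ) (hε0 : 0 < ε) (hε1 : ε < 1) :
    ∃ C : ℝ, ∀ D : ℝ, 1 ≤ D →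
      ∑ d ∈ Finset.Icc 1 ⌊D⌋₊, (rad d : ℝ) ^ (ε - 1) ≤ C * D ^ (3 * ε) := by
  classical
  set δ : ℝ := 1 - (2:ℝ) ^ (-(2*ε)) with hδ
  have hx2 : (2:ℝ) ^ (-(2*ε)) < 1 :=
    Real.rpow_lt_one_of_one_lt_of_neg one_lt_two (by linarith)
  have hδpos : 0 < δ := by simp only [hδ, sub_pos]; exact hx2
  set T : ℝ := ∑' n : ℕ, (n:ℝ) ^ (-(1+ε)) with hT
  have hsummable : Summable (fun n : ℕ => (n:ℝ) ^ (-(1+ε))) :=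
    Real.summable_nat_rpow.2 (by linarith)
  refine ⟨Real.exp (T/δ), fun D hD => ?_⟩
  set N := ⌊D⌋₊ with hN
  set h : ℕ → ℕ → ℝ := fun p a =>
    if a = 0 then 1 else (p:ℝ) ^ (ε-1) * (((p:ℝ) ^ a) ^ (-(2*ε))) with hh
  have h0 : ∀ p, h p 0 = 1 := fun p => by simp [hh]
  have hnn : ∀ p a, 0 ≤ h p a := by
    intro p a
    simp only [hh]
    split_ifs
    · norm_num
    · positivity
  -- Step 1: Rankin's trick
  have step1 : ∑ d ∈ Finset.Icc 1 N, (rad d : ℝ) ^ (ε - 1)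
      ≤ D ^ (2*ε) * ∑ d ∈ Finset.Icc 1 N,
          (rad d : ℝ) ^ (ε - 1) * (d:ℝ) ^ (-(2*ε)) := by
    rw [Finset.mul_sum]
    refine Finset.sum_le_sum ?_
    intro d hd
    simp only [Finset.mem_Icc] at hd
    have hd0 : (0:ℝ) < d := by exact_mod_cast hd.1
    have hdD : (d:ℝ) ≤ D := by
      have h1 : (d:ℝ) ≤ (N:ℝ) := by exact_mod_cast hd.2
      exact le_trans h1 (Nat.floor_le (by linarith))
    have key : (1:ℝ) ≤ D ^ (2*ε) * (d:ℝ) ^ (-(2*ε)) := by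
      rw [Real.rpow_neg (le_of_lt hd0), ← div_eq_mul_inv,
        le_div_iff₀ (by positivity), one_mul]
      exact Real.rpow_le_rpow (le_of_lt hd0) hdD (by linarith)
    have hr : (0:ℝ) ≤ (rad d : ℝ) ^ (ε - 1) := Real.rpow_nonneg (by positivity) _
    calc (rad d : ℝ) ^ (ε - 1) = (rad d : ℝ) ^ (ε - 1) * 1 := by ring
      _ ≤ (rad d : ℝ) ^ (ε - 1) * (D ^ (2*ε) * (d:ℝ) ^ (-(2*ε))) :=
          mul_le_mul_of_nonneg_left key hr
      _ = D ^ (2*ε) * ((rad d : ℝ) ^ (ε - 1) * (d:ℝ) ^ (-(2*ε))) := by ring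
  -- Step 2: rewrite as product over primes and apply the expansion lemma
  have step2 : ∑ d ∈ Finset.Icc 1 N, (rad d : ℝ) ^ (ε - 1) * (d:ℝ) ^ (-(2*ε))
      ≤ ∏ p ∈ Finset.filter Nat.Prime (Finset.range (N+1)),
          ∑ a ∈ Finset.range (N+1), h p a := by
    have heq : ∀ d ∈ Finset.Icc 1 N,
        (rad d : ℝ) ^ (ε - 1) * (d:ℝ) ^ (-(2*ε))
          = ∏ p ∈ d.primeFactors, h p (d.factorization p) := by
      intro d hd
      simp only [Finset.mem_Icc] at hd
      rw [rad_rpow_eq ε d (by omega)]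
      refine Finset.prod_congr rfl ?_
      intro p hp
      have : d.factorization p ≠ 0 := by
        rw [← Finsupp.mem_support_iff, Nat.support_factorization]; exact hp
      simp only [hh, if_neg this]
    rw [Finset.sum_congr rfl heq]
    exact rad_aux_sum_le_prod_sum N h h0 hnn
  -- Step 3: bound each Euler factor
  have step3 : ∀ p ∈ Finset.filter Nat.Prime (Finset.range (N+1)),
      ∑ a ∈ Finset.range (N+1), h p a ≤ Real.exp ((p:ℝ) ^ (-(1+ε)) / δ) := by
    intro p hp
    have hpp : p.Prime := (Finset.mem_filter.1 hp).2
    have hp2 : (2:ℝ) ≤ (p:ℝ) := by exact_mod_cast hpp.two_le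
    have hp0 : (0:ℝ) < (p:ℝ) := by linarith
    set x : ℝ := (p:ℝ) ^ (-(2*ε)) with hxdef
    have hx0 : 0 ≤ x := Real.rpow_nonneg (le_of_lt hp0) _
    have hx1 : x < 1 :=
      Real.rpow_lt_one_of_one_lt_of_neg (by linarith) (by linarith)
    have hxle : x ≤ (2:ℝ) ^ (-(2*ε)) := by
      rw [hxdef, Real.rpow_neg (le_of_lt hp0), Real.rpow_neg (by norm_num)]
      refine inv_anti₀ (by positivity) ?_
      exact Real.rpow_le_rpow (by norm_num) hp2 (by linarith)
    have hδle : δ ≤ 1 - x := by simp only [hδ]; linarith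
    have hgeo : ∑ k ∈ Finset.range N, x ^ k ≤ (1 - x)⁻¹ := by
      refine le_trans (Summable.sum_le_tsum (Finset.range N)
        (fun i _ => pow_nonneg hx0 i)
        (summable_geometric_of_lt_one hx0 hx1)) ?_
      rw [(hasSum_geometric_of_lt_one hx0 hx1).tsum_eq]
    have hpow : ∀ k : ℕ, ((p:ℝ) ^ (k+1) : ℝ) ^ (-(2*ε)) = x ^ (k+1) := by
      intro k
      rw [← Real.rpow_natCast (p:ℝ) (k+1), ← Real.rpow_natCast x (k+1), hxdef,
        ← Real.rpow_mul hp0.le, ← Real.rpow_mul hp0.le]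
      ring_nf
    have hsplit : ∑ a ∈ Finset.range (N+1), h p a
        = 1 + (p:ℝ) ^ (ε-1) * ∑ k ∈ Finset.range N, x ^ (k+1) := by
      rw [Finset.sum_range_succ' (h p) N, h0, Finset.mul_sum]
      rw [add_comm]
      congr 1
      refine Finset.sum_congr rfl ?_
      intro k _
      simp only [hh, Nat.succ_ne_zero, if_neg (Nat.succ_ne_zero k)]
      rw [hpow k]
    have hsum2 : ∑ k ∈ Finset.range N, x ^ (k+1)
        = x * ∑ k ∈ Finset.range N, x ^ k := by
      rw [Finset.mul_sum]
      exact Finset.sum_congr rfl fun k _ => by ring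
    have hmain : ∑ a ∈ Finset.range (N+1), h p a
        ≤ 1 + (p:ℝ) ^ (-(1+ε)) / δ := by
      rw [hsplit, hsum2]
      have h1 : (p:ℝ) ^ (ε-1) * (x * ∑ k ∈ Finset.range N, x ^ k)
          ≤ (p:ℝ) ^ (ε-1) * x * (1-x)⁻¹ := by
        rw [mul_assoc ((p:ℝ) ^ (ε-1)) x]
        refine mul_le_mul_of_nonneg_left ?_ (by positivity)
        exact mul_le_mul_of_nonneg_left hgeo hx0
      have h2 : (p:ℝ) ^ (ε-1) * x = (p:ℝ) ^ (-(1+ε)) := by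
        rw [hxdef, ← Real.rpow_add hp0]
        ring_nf
      have h3 : (1-x)⁻¹ ≤ δ⁻¹ := inv_anti₀ hδpos hδle
      have h4 : (p:ℝ) ^ (ε-1) * x * (1-x)⁻¹ ≤ (p:ℝ) ^ (-(1+ε)) / δ := by
        rw [h2, div_eq_mul_inv]
        exact mul_le_mul_of_nonneg_left h3 (Real.rpow_nonneg (le_of_lt hp0) _)
      linarith
    refine le_trans hmain ?_
    have := Real.add_one_le_exp ((p:ℝ) ^ (-(1+ε)) / δ)
    linarith
  -- Step 4: product of factors ≤ exp(T/δ)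
  have step4 : ∏ p ∈ Finset.filter Nat.Prime (Finset.range (N+1)),
      ∑ a ∈ Finset.range (N+1), h p a ≤ Real.exp (T/δ) := by
    calc ∏ p ∈ Finset.filter Nat.Prime (Finset.range (N+1)),
          ∑ a ∈ Finset.range (N+1), h p a
        ≤ ∏ p ∈ Finset.filter Nat.Prime (Finset.range (N+1)),
            Real.exp ((p:ℝ) ^ (-(1+ε)) / δ) := by
          refine Finset.prod_le_prod ?_ step3
          intro p _
          exact Finset.sum_nonneg fun a _ => hnn p a
      _ = Real.exp (∑ p ∈ Finset.filter Nat.Prime (Finset.range (N+1)),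
            (p:ℝ) ^ (-(1+ε)) / δ) := (Real.exp_sum _ _).symm
      _ ≤ Real.exp (T/δ) := by
          refine Real.exp_le_exp.2 ?_
          rw [← Finset.sum_div, div_le_div_iff_of_pos_right hδpos]
          refine Summable.sum_le_tsum _ (fun i _ => Real.rpow_nonneg (Nat.cast_nonneg i) _)
            hsummable
  -- Combine
  have hDpos : (0:ℝ) < D := by linarith
  have hexp_nn : (0:ℝ) < Real.exp (T/δ) := Real.exp_pos _
  calc ∑ d ∈ Finset.Icc 1 N, (rad d : ℝ) ^ (ε - 1)
      ≤ D ^ (2*ε) * ∑ d ∈ Finset.Icc 1 N,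
          (rad d : ℝ) ^ (ε - 1) * (d:ℝ) ^ (-(2*ε)) := step1
    _ ≤ D ^ (2*ε) * Real.exp (T/δ) := by
        refine mul_le_mul_of_nonneg_left (le_trans step2 step4) ?_
        positivity
    _ ≤ Real.exp (T/δ) * D ^ (3*ε) := by
        rw [mul_comm]
        refine mul_le_mul_of_nonneg_left ?_ (le_of_lt hexp_nn)
        exact Real.rpow_le_rpow_of_exponent_le hD (by linarith)
end

section
/- Let p be a prime, q = p², and let S ⊆ P^{m-1}(F_q) be stable under the Frobenius x ↦ x^p (e.g. the F_q-points of a variety defined over F_p). Then E_{c ∈ F_p^m}[#{[x] ∈ S : c·x = 0}] = p^{-1}·|S ∩ P^{m-1}(F_p)| + p^{-2}·(|S| − |S ∩ P^{m-1}(F_p)|). -/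
/-!
For a point `[x]` of `P^{m-1}(L)`, `L ⊇ K = F_q`, the coefficient vectors `c ∈ K^m` with
`c · x = 0` form the kernel of `c ↦ ∑ cᵢ xᵢ`, whose image is the `K`-span `W` of the coordinates of
`x`; hence there are `q^m / |W|` of them. Every element of `W` satisfies `w^q = a w` exactly when
the coordinates do, i.e. when `x` is proportional to its Frobenius conjugate, and then `W` lies in
the root set of `X^q - aX`, so `dim W ≤ 1`; conversely a line `W = K b` gives `a = b^{q-1}`.
When `[L : K] = 2`, `W` is therefore a line for Frobenius-fixed points and all of `L` otherwise,
and the formula follows by double counting the incidences between `S` and the vectors `c`.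
-/

open Classical

open Submodule Module

theorem Projectivization.forall_mk_eq_iff_exists_smul_rep {K V : Type*} [DivisionRing K]
    [AddCommGroup V] [Module K V] (x : Projectivization K V) (w : V) :
    (∀ hw : w ≠ 0, mk K w hw = x) ↔ ∃ a : K, a • x.rep = w := by
  by_cases hw : w = 0
  · simp [hw]
  · rw [← mk_eq_mk_iff' K w x.rep hw x.rep_nonzero, mk_rep]
    exact ⟨fun h => h hw, fun h _ => h⟩

theorem LinearMap.card_ker_mul_card_range {R M N : Type*} [Ring R] [AddCommGroup M]
    [AddCommGroup N] [Module R M] [Module R N] (f : M →ₗ[R] N) :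
    Nat.card (ker f) * Nat.card (range f) = Nat.card M := by
  have := f.toAddMonoidHom.ker.card_mul_index
  rwa [AddSubgroup.index_ker] at this

theorem card_sum_smul_eq_zero_mul_card_span {R M ι : Type*} [Ring R] [AddCommGroup M]
    [Module R M] [Fintype ι] (v : ι → M) :
    Nat.card {c : ι → R // ∑ i, c i • v i = 0} * Nat.card (span R (Set.range v)) =
      Nat.card R ^ Fintype.card ι := by
  rw [← Fintype.range_linearCombination, ← Nat.card_eq_fintype_card, ← Nat.card_fun,
    ← (Fintype.linearCombination R v).card_ker_mul_card_range]
  simp only [LinearMap.mem_ker, Fintype.linearCombination_apply]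

section FiniteField

variable {K L : Type*} [Field K] [Fintype K] [Field L] [Algebra K L]

local notation "q" => Fintype.card K

open Polynomial in
theorem finrank_le_one_of_forall_pow_card_eq_mul (W : Submodule K L) [FiniteDimensional K W]
    (a : L) (hW : ∀ w ∈ W, w ^ q = a * w) : finrank K W ≤ 1 := by
  have hq : 1 < q := Fintype.one_lt_card
  set f : L[X] := X ^ q - C a * X
  have hf : f.natDegree = q := by
    rw [natDegree_sub_eq_left_of_natDegree_lt] <;> rw [natDegree_X_pow]
    exact natDegree_C_mul_le a X |>.trans_lt (by simpa using hq)
  have hf0 : f ≠ 0 := by rintro h; simp [h] at hf; omega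
  have hcard : Nat.card W ≤ q := calc
    Nat.card W ≤ Nat.card f.roots.toFinset :=
      Nat.card_mono (Finset.finite_toSet _) fun w hw => by simp [f, mem_roots hf0, hW w hw]
    _ ≤ Multiset.card f.roots := by
      rw [Nat.card_eq_fintype_card, Fintype.card_coe]; exact f.roots.toFinset_card_le
    _ ≤ q := hf ▸ f.card_roots'
  rw [natCard_eq_pow_finrank (K := K), Nat.card_eq_fintype_card] at hcard
  exact (Nat.pow_le_pow_iff_right hq).mp (by simpa using hcard)

variable {ι : Type*}

theorem finrank_span_range_le_one_iff [Finite ι] (v : ι → L) :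
    finrank K (span K (Set.range v)) ≤ 1 ↔ ∃ a : L, ∀ i, v i ^ q = a * v i := by
  have := FiniteDimensional.span_of_finite K (Set.finite_range v)
  constructor
  · intro h
    obtain ⟨b, hb⟩ := finrank_le_one_iff.mp h
    refine ⟨(b : L) ^ (q - 1), fun i => ?_⟩
    obtain ⟨c, hc⟩ := hb ⟨v i, subset_span ⟨i, rfl⟩⟩
    have hvi : v i = c • (b : L) := by simpa using (congrArg Subtype.val hc).symm
    rw [hvi, _root_.smul_pow, FiniteField.pow_card, mul_smul_comm, ← pow_succ,
      Nat.sub_add_cancel Fintype.card_pos]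
  · rintro ⟨a, ha⟩
    apply finrank_le_one_of_forall_pow_card_eq_mul _ a
    intro w hw
    have : span K (Set.range v) ≤
        LinearMap.ker ((FiniteField.frobeniusAlgHom K L).toLinearMap - LinearMap.mulLeft K a) := by
      rw [span_le]
      rintro _ ⟨i, rfl⟩
      simp [ha]
    simpa [sub_eq_zero] using this hw

theorem finrank_span_range_eq_ite_of_finrank_eq_two [Finite ι] (hL : finrank K L = 2)
    {v : ι → L} (hv : v ≠ 0) :
    finrank K (span K (Set.range v)) = if ∃ a : L, ∀ i, v i ^ q = a * v i then 1 else 2 := by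
  have : FiniteDimensional K L := .of_finrank_eq_succ hL
  have hle : finrank K (span K (Set.range v)) ≤ 2 := hL ▸ Submodule.finrank_le _
  have hne : finrank K (span K (Set.range v)) ≠ 0 := by
    rw [Ne, Submodule.finrank_eq_zero, span_eq_bot]
    rintro h
    exact hv (funext fun i => h _ ⟨i, rfl⟩)
  split_ifs with h <;> rw [← finrank_span_range_le_one_iff] at h <;> omega

theorem card_filter_sum_algebraMap_mul_eq_zero_mul_pow [Fintype ι] [DecidableEq ι]
    (hL : finrank K L = 2) {v : ι → L} (hv : v ≠ 0) :
    (Finset.univ.filter fun c : ι → K => ∑ i, algebraMap K L (c i) * v i = 0).card *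
      q ^ (if ∃ a : L, ∀ i, v i ^ q = a * v i then 1 else 2) = q ^ Fintype.card ι := by
  have := FiniteDimensional.span_of_finite K (Set.finite_range v)
  have key := card_sum_smul_eq_zero_mul_card_span (R := K) v
  rw [natCard_eq_pow_finrank (K := K) (V := span K (Set.range v)),
    finrank_span_range_eq_ite_of_finrank_eq_two hL hv, Nat.card_eq_fintype_card (α := K),
    Nat.card_eq_fintype_card, Fintype.card_subtype] at key
  simpa only [Algebra.smul_def] using key

theorem card_filter_sum_algebraMap_mul_rep_eq_zero [Fintype ι] [DecidableEq ι]
    (hL : finrank K L = 2) (x : Projectivization L (ι → L)) :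
    ((Finset.univ.filter fun c : ι → K => ∑ i, algebraMap K L (c i) * x.rep i = 0).card : ℝ) =
      if ∀ h : (fun i => x.rep i ^ q) ≠ 0, Projectivization.mk L (fun i => x.rep i ^ q) h = x
      then (q : ℝ) ^ Fintype.card ι / q else (q : ℝ) ^ Fintype.card ι / q ^ 2 := by
  have hq : (q : ℝ) ≠ 0 := Nat.cast_ne_zero.mpr Fintype.card_ne_zero
  have key := card_filter_sum_algebraMap_mul_eq_zero_mul_pow hL x.rep_nonzero
  have hfix :
      (∀ h : (fun i => x.rep i ^ q) ≠ 0, Projectivization.mk L (fun i => x.rep i ^ q) h = x) ↔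
        ∃ a, ∀ i, x.rep i ^ q = a * x.rep i := by
    simp only [Projectivization.forall_mk_eq_iff_exists_smul_rep, funext_iff, Pi.smul_apply,
      smul_eq_mul]
    exact exists_congr fun a => forall_congr' fun i => eq_comm
  simp only [← hfix] at key
  split_ifs at key ⊢
  · rw [pow_one] at key
    rw [eq_div_iff hq]
    exact_mod_cast key
  · rw [eq_div_iff (by positivity)]
    exact_mod_cast key

end FiniteField

theorem average_hyperplane_section_count_quadratic_extension_general
    (p : ℕ) [Fact p.Prime] (m : ℕ)
    (S : Finset (Projectivization (GaloisField p 2) (Fin m → GaloisField p 2))) :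
    (∑ c : Fin m → ZMod p,
        ((S.filter (fun x =>
            ∑ i, algebraMap (ZMod p) (GaloisField p 2) (c i) * x.rep i = 0)).card : ℝ))
        / (p : ℝ) ^ m =
      ((S.filter (fun x =>
          ∀ h : ((fun i => x.rep i ^ p) : Fin m → GaloisField p 2) ≠ 0,
            Projectivization.mk (GaloisField p 2) (fun i => x.rep i ^ p) h = x)).card : ℝ)
          / (p : ℝ)
        + ((S.card : ℝ) -
            ((S.filter (fun x =>
              ∀ h : ((fun i => x.rep i ^ p) : Fin m → GaloisField p 2) ≠ 0,
                Projectivization.mk (GaloisField p 2) (fun i => x.rep i ^ p) h = x)).card : ℝ))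
          / (p : ℝ) ^ 2 := by
  have hcount := card_filter_sum_algebraMap_mul_rep_eq_zero (K := ZMod p) (ι := Fin m)
    (GaloisField.finrank p two_ne_zero)
  simp only [ZMod.card, Fintype.card_fin] at hcount
  have hswap := Finset.sum_card_bipartiteAbove_eq_sum_card_bipartiteBelow (s := Finset.univ)
    (t := S) fun (c : Fin m → ZMod p) x => ∑ i, algebraMap _ (GaloisField p 2) (c i) * x.rep i = 0
  simp only [Finset.bipartiteAbove, Finset.bipartiteBelow] at hswap
  rw [← Nat.cast_sum, hswap, Nat.cast_sum, Finset.sum_congr rfl fun x _ => hcount x,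
    Finset.sum_ite, Finset.sum_const, Finset.sum_const, nsmul_eq_mul, nsmul_eq_mul,
    ← Finset.card_filter_add_card_filter_not (s := S) (p := fun x =>
      ∀ h : ((fun i => x.rep i ^ p) : Fin m → GaloisField p 2) ≠ 0,
        Projectivization.mk (GaloisField p 2) (fun i => x.rep i ^ p) h = x)]
  have hp : (p : ℝ) ≠ 0 := Nat.cast_ne_zero.mpr (Fact.out : p.Prime).ne_zero
  push_cast
  field_simp
  ring

/-- Incidences over `F_q`, `q = p²`, averaged over hyperplanes defined over `F_p`:
if `S ⊆ P^{m-1}(F_q)` is stable under the coordinatewise Frobenius `x ↦ x^p`, then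
`E_{c ∈ F_p^m}[#{[x] ∈ S : c·x = 0}] = p^{-1}·|S^Frob| + p^{-2}·(|S| − |S^Frob|)`,
where `S^Frob` (the Frobenius-fixed points) plays the role of `S ∩ P^{m-1}(F_p)`. -/
theorem average_hyperplane_section_count_quadratic_extension
    (p : ℕ) [Fact p.Prime] (m : ℕ)
    (S : Finset (Projectivization (GaloisField p 2) (Fin m → GaloisField p 2)))
    (hFrob : ∀ x ∈ S,
      ∀ h : ((fun i => x.rep i ^ p) : Fin m → GaloisField p 2) ≠ 0,
        Projectivization.mk (GaloisField p 2) (fun i => x.rep i ^ p) h ∈ S) :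
    (∑ c : Fin m → ZMod p,
        ((S.filter (fun x =>
            ∑ i, algebraMap (ZMod p) (GaloisField p 2) (c i) * x.rep i = 0)).card : ℝ))
        / (p : ℝ) ^ m =
      ((S.filter (fun x =>
          ∀ h : ((fun i => x.rep i ^ p) : Fin m → GaloisField p 2) ≠ 0,
            Projectivization.mk (GaloisField p 2) (fun i => x.rep i ^ p) h = x)).card : ℝ)
          / (p : ℝ)
        + ((S.card : ℝ) -
            ((S.filter (fun x =>
              ∀ h : ((fun i => x.rep i ^ p) : Fin m → GaloisField p 2) ≠ 0,
                Projectivization.mk (GaloisField p 2) (fun i => x.rep i ^ p) h = x)).card : ℝ))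
          / (p : ℝ) ^ 2 :=
  average_hyperplane_section_count_quadratic_extension_general p m S
end
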